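/- For N ≥ 1 and 1 ≤ p ≤ N-1, the polynomial Φ_N(x_1,...,x_N) = Σ_{d=1}^N (-1)^d (1/d) Σ_{i_1+...+i_d = N} x_{i_1}···x_{i_d} satisfies the first-order PDE (∂/∂x_p)Φ_N + Σ_{h=p+1}^N x_{h-p} (∂/∂x_h)Φ_N = 0. -/

import Mathlib

open MvPolynomial Finset

/-- The Cayley polynomial `Φ_N = ∑_{d=1}^N (-1)^d (1/d) ∑_{i₁+⋯+i_d = N, iₖ ≥ 1} x_{i₁}⋯x_{i_d}`,
as a multivariate polynomial in variables `X 1, …, X N`. -/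
noncomputable def cayley (N : ℕ) : MvPolynomial ℕ ℝ :=
  ∑ d ∈ Finset.Icc 1 N, ((-1 : ℝ) ^ d * (d : ℝ)⁻¹) •
    ∑ t ∈ (Finset.Nat.antidiagonalTuple d N).filter (fun t => ∀ i, 0 < t i),
      ∏ i, MvPolynomial.X (t i)

/-!
With `F = ∑_{k=1}^N x_k t^k`, `Φ_N` is the coefficient of `t^N` in `-log (1 + F)`. Applied to
coefficients in `t`, the vector field satisfies `X_p F ≡ t^p (1 + F) mod t^(N+1)`, so
`X_p (-log (1 + F)) = -X_p F / (1 + F) ≡ -t^p`, whose coefficient of `t^N` vanishes as `p < N`.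
Since `t ∣ F`, truncating the logarithm and the geometric series for `1 / (1 + F)` after the
`N`-th power costs only multiples of `t^(N+1)`.
-/

noncomputable section

open scoped Polynomial

namespace Derivation

variable {R A : Type*} [CommRing R] [CommRing A] [Algebra R A]

def mapCoeffsPolynomial (D : Derivation R A A) : Derivation R A[X] A[X] :=
  PolynomialModule.equivPolynomialSelf.compDer D.mapCoeffs

@[simp]
lemma coeff_mapCoeffsPolynomial (D : Derivation R A A) (f : A[X]) (i : ℕ) :
    (D.mapCoeffsPolynomial f).coeff i = D (f.coeff i) := rfl

end Derivation

section TruncNegLog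

variable (K : Type*) {S : Type*} [Field K] [CharZero K] [CommRing S] [Algebra K S]

/-- The truncation after the `n`-th power of `-log (1 + f)`. -/
def truncNegLog (n : ℕ) (f : S) : S :=
  ∑ d ∈ Icc 1 n, ((-1 : K) ^ d * (d : K)⁻¹) • f ^ d

variable {K}

lemma Derivation.map_truncNegLog (D : Derivation K S S) (n : ℕ) (f : S) :
    D (truncNegLog K n f) = -(∑ e ∈ range n, (-f) ^ e) * D f := by
  induction n with
  | zero => simp [truncNegLog]
  | succ n ih =>
    have hn : ((n + 1 : ℕ) : K) ≠ 0 := Nat.cast_ne_zero.mpr n.succ_ne_zero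
    rw [truncNegLog, sum_Icc_succ_top (by omega), ← truncNegLog, map_add, ih, D.map_smul,
      D.leibniz_pow, sum_range_succ, ← Nat.cast_smul_eq_nsmul K, smul_smul, mul_assoc,
      inv_mul_cancel₀ hn, mul_one, Nat.add_sub_cancel, neg_pow, pow_succ, Algebra.smul_def]
    simp only [map_mul, map_pow, map_neg, map_one, smul_eq_mul]
    ring

lemma Derivation.pow_dvd_map_truncNegLog_add {D : Derivation K S S} {t f : S} {n p : ℕ}
    (hp : 1 ≤ p) (hf : t ∣ f) (hDf : t ^ (n + 1) ∣ D f - t ^ p * (1 + f)) :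
    t ^ (n + 1) ∣ D (truncNegLog K n f) + t ^ p := by
  obtain ⟨q, hq⟩ := hDf
  have hgeom : (∑ e ∈ range n, (-f) ^ e) * (1 + f) = 1 - (-f) ^ n := by
    linear_combination -geom_sum_mul (-f) n
  have key : D (truncNegLog K n f) + t ^ p =
      t ^ p * (-f) ^ n - (∑ e ∈ range n, (-f) ^ e) * (t ^ (n + 1) * q) := by
    rw [D.map_truncNegLog]
    linear_combination (-(∑ e ∈ range n, (-f) ^ e)) * hq - t ^ p * hgeom
  rw [key, pow_succ']
  exact dvd_sub (mul_dvd_mul (dvd_pow_self t (by omega)) (pow_dvd_pow_of_dvd hf.neg_right n))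
    (dvd_mul_of_dvd_right (dvd_mul_right _ _) _)

end TruncNegLog

def cayleyGen (N : ℕ) : (MvPolynomial ℕ ℝ)[X] :=
  ∑ k ∈ Icc 1 N, Polynomial.monomial k (X k)

lemma coeff_cayleyGen (N k : ℕ) :
    (cayleyGen N).coeff k = if 1 ≤ k ∧ k ≤ N then X k else 0 := by
  simp [cayleyGen, Polynomial.coeff_monomial]

lemma X_dvd_cayleyGen (N : ℕ) : Polynomial.X ∣ cayleyGen N := by
  simp [Polynomial.X_dvd_iff, coeff_cayleyGen]

lemma coeff_cayleyGen_pow (N d : ℕ) :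
    ((cayleyGen N) ^ d).coeff N =
      ∑ t ∈ (Nat.antidiagonalTuple d N).filter (fun t => ∀ i, 0 < t i), ∏ i, X (t i) := by
  have hset : (Nat.antidiagonalTuple d N).filter (fun t => ∀ i, 0 < t i) =
      (Fintype.piFinset fun _ => Icc 1 N).filter (fun t => ∑ i, t i = N) := by
    ext t
    simp only [mem_filter, Nat.mem_antidiagonalTuple, Fintype.mem_piFinset, mem_Icc]
    constructor
    · rintro ⟨hsum, hpos⟩
      refine ⟨fun i => ⟨hpos i, ?_⟩, hsum⟩
      exact hsum ▸ single_le_sum (fun j _ => Nat.zero_le (t j)) (mem_univ i)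
    · rintro ⟨hrange, hsum⟩
      exact ⟨hsum, fun i => (hrange i).1⟩
  rw [cayleyGen, ← Fin.prod_const, prod_univ_sum, Polynomial.finsetSum_coeff, hset, sum_filter]
  refine sum_congr rfl fun t _ => ?_
  simp_rw [← Polynomial.C_mul_X_pow_eq_monomial, prod_mul_distrib, ← map_prod,
    prod_pow_eq_pow_sum, Polynomial.coeff_C_mul_X_pow, eq_comm]

lemma cayley_eq_coeff_truncNegLog (N : ℕ) :
    cayley N = (truncNegLog ℝ N (cayleyGen N)).coeff N := by
  simp only [cayley, truncNegLog, Polynomial.finsetSum_coeff, Polynomial.coeff_smul,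
    coeff_cayleyGen_pow]

def cayleyField (N p : ℕ) : Derivation ℝ (MvPolynomial ℕ ℝ) (MvPolynomial ℕ ℝ) :=
  pderiv p + ∑ h ∈ Icc (p + 1) N, (X (h - p) : MvPolynomial ℕ ℝ) • pderiv h

lemma cayleyField_apply (N p : ℕ) (a : MvPolynomial ℕ ℝ) :
    cayleyField N p a = pderiv p a + ∑ h ∈ Icc (p + 1) N, X (h - p) * pderiv h a := by
  simp only [cayleyField, Derivation.add_apply, ← Derivation.coeFnAddMonoidHom_apply, map_sum,
    Finset.sum_apply]
  simp [Derivation.coeFnAddMonoidHom_apply]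

lemma cayleyField_X (N p k : ℕ) :
    cayleyField N p (X k) =
      (if k = p then 1 else 0) + if p + 1 ≤ k ∧ k ≤ N then X (k - p) else 0 := by
  simp [cayleyField_apply, pderiv_X, Pi.single_apply]

lemma X_pow_dvd_mapCoeffs_cayleyGen_sub (N p : ℕ) (hp : 1 ≤ p) :
    Polynomial.X ^ (N + 1) ∣ (cayleyField N p).mapCoeffsPolynomial (cayleyGen N) -
      Polynomial.X ^ p * (1 + cayleyGen N) := by
  refine Polynomial.X_pow_dvd_iff.mpr fun d hd => ?_
  rw [Polynomial.coeff_sub, Derivation.coeff_mapCoeffsPolynomial, Polynomial.coeff_X_pow_mul',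
    Polynomial.coeff_add, Polynomial.coeff_one, coeff_cayleyGen, coeff_cayleyGen,
    apply_ite (cayleyField N p), cayleyField_X, map_zero]
  split_ifs <;> first | omega | ring

end

theorem cayley_annihilated_by_Xp_general (N p : ℕ) (hp1 : 1 ≤ p) (hp2 : p ≤ N - 1) :
    MvPolynomial.pderiv p (cayley N) +
      ∑ h ∈ Finset.Icc (p + 1) N,
        MvPolynomial.X (h - p) * MvPolynomial.pderiv h (cayley N) = 0 := by
  have hdvd := Derivation.pow_dvd_map_truncNegLog_add hp1 (X_dvd_cayleyGen N)
    (X_pow_dvd_mapCoeffs_cayleyGen_sub N p hp1)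
  have hcoeff := Polynomial.X_pow_dvd_iff.mp hdvd N N.lt_succ_self
  rwa [Polynomial.coeff_add, Derivation.coeff_mapCoeffsPolynomial, ← cayley_eq_coeff_truncNegLog,
    cayleyField_apply, Polynomial.coeff_X_pow, if_neg (by omega), add_zero] at hcoeff

/-- The vector field `X_p = d/dx_p + sum_{h=p+1}^N x_{h-p} d/dx_h` annihilates `Phi_N`. -/
theorem cayley_annihilated_by_Xp (N p : ℕ) (hN : 1 ≤ N) (hp1 : 1 ≤ p) (hp2 : p ≤ N - 1) :
    MvPolynomial.pderiv p (cayley N) +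
      ∑ h ∈ Finset.Icc (p + 1) N,
        MvPolynomial.X (h - p) * MvPolynomial.pderiv h (cayley N) = 0 :=
  cayley_annihilated_by_Xp_general N p hp1 hp2
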